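/- Let α > 1 be real, n ≥ 1 be real, let τ > 0 satisfy Σ_{i=1}^∞ i^{-α}/(i^{-α} + τ) = n, and define Ω by n·Ω = Σ_{i=1}^∞ (i^{-α}/(i^{-α} + τ))² (this series converges). Then (π(α − 1)/(α² sin(π/α))) · τ^{-1/α} − 1 ≤ n·Ω ≤ (π(α − 1)/(α² sin(π/α))) · τ^{-1/α}. -/

import Mathlib

/-!
With `g x = (1 + τ x ^ α) ^ (-2)`, the `i`-th summand of `n Ω` is `g i`. Since `g` decreases on
`[0, ∞)` from `g 0 = 1`, the integral test traps `∑_{i ≥ 1} g i` between `∫₀^∞ g - 1` and `∫₀^∞ g`.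
The substitutions `x = (u / τ) ^ (1 / α)` and `t = u / (1 + u)` turn this integral into
`τ ^ (-1 / α) / α · B(1 / α, 2 - 1 / α)`, and Euler's reflection formula evaluates the beta value
to `(1 - 1 / α) π / sin (π / α)`.
-/

open Real MeasureTheory Set

theorem Real.Gamma_mul_Gamma_two_sub {c : ℝ} (hc : c ≠ 1) :
    Gamma c * Gamma (2 - c) = (1 - c) * (π / sin (π * c)) := by
  rw [show 2 - c = (1 - c) + 1 by ring, Gamma_add_one (sub_ne_zero.mpr hc.symm),
    mul_left_comm, Gamma_mul_Gamma_one_sub]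

theorem integral_rpow_mul_one_sub_rpow {a b : ℝ} (ha : 0 < a) (hb : 0 < b) :
    ∫ x in (0 : ℝ)..1, x ^ (a - 1) * (1 - x) ^ (b - 1) = Gamma a * Gamma b / Gamma (a + b) := by
  have h := Complex.betaIntegral_eq_Gamma_mul_div a b (by simpa) (by simpa)
  rw [Complex.betaIntegral, ← Complex.ofReal_add, Complex.Gamma_ofReal, Complex.Gamma_ofReal,
    Complex.Gamma_ofReal] at h
  apply Complex.ofReal_injective
  rw [← intervalIntegral.integral_ofReal]
  push_cast
  rw [← h]
  refine intervalIntegral.integral_congr fun x hx => ?_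
  rw [uIcc_of_le zero_le_one] at hx
  simp only [Complex.ofReal_cpow hx.1, Complex.ofReal_cpow (sub_nonneg.mpr hx.2)]
  push_cast
  rfl

theorem integral_Ioi_rpow_mul_one_add_rpow_neg (a s : ℝ) :
    ∫ u in Ioi (0 : ℝ), u ^ (a - 1) * (1 + u) ^ (-s) =
      ∫ x in (0 : ℝ)..1, x ^ (a - 1) * (1 - x) ^ (s - a - 1) := by
  have hderiv : ∀ u ∈ Ioi (0 : ℝ),
      HasDerivWithinAt (fun u => u / (1 + u)) ((1 + u) ^ 2)⁻¹ (Ioi 0) u := fun u hu => by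
    have hu : 1 + u ≠ 0 := by linarith [mem_Ioi.mp hu]
    have h := (hasDerivAt_id' u).fun_div ((hasDerivAt_id' u).const_add 1) hu
    refine (h.congr_deriv ?_).hasDerivWithinAt
    field_simp
    ring
  have hinj : InjOn (fun u : ℝ => u / (1 + u)) (Ioi 0) := fun u hu v hv huv => by
    have hu : 0 < u := hu
    have hv : 0 < v := hv
    field_simp at huv
    linarith
  have himage : (fun u : ℝ => u / (1 + u)) '' Ioi 0 = Ioo 0 1 := by
    ext x
    constructor
    · rintro ⟨u, hu, rfl⟩
      have hu : 0 < u := hu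
      exact ⟨by positivity, (div_lt_one (by positivity)).mpr (by linarith)⟩
    · rintro ⟨hx0, hx1⟩
      refine ⟨x / (1 - x), div_pos hx0 (by linarith), ?_⟩
      have : 1 - x ≠ 0 := by linarith
      field_simp
      ring
  rw [intervalIntegral.integral_of_le zero_le_one, integral_Ioc_eq_integral_Ioo, ← himage,
    integral_image_eq_integral_abs_deriv_smul measurableSet_Ioi hderiv hinj]
  refine setIntegral_congr_fun measurableSet_Ioi fun u hu => ?_
  have hu : 0 < u := hu
  have hw : 0 < 1 + u := by linarith
  have hsplit : (1 + u) ^ s = (1 + u) ^ (a - 1) * (1 + u) ^ (s - a - 1) * (1 + u) ^ 2 := by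
    rw [← rpow_natCast, ← rpow_add hw, ← rpow_add hw]
    congr 1
    push_cast
    ring
  have hcompl : 1 - u / (1 + u) = (1 + u)⁻¹ := by field_simp; ring
  rw [smul_eq_mul, abs_of_pos (by positivity), hcompl, div_rpow hu.le hw.le, inv_rpow hw.le,
    rpow_neg hw.le, hsplit]
  field_simp

theorem integral_Ioi_one_add_mul_rpow_rpow_neg {α τ s : ℝ} (hα : 0 < α) (hτ : 0 < τ)
    (hs : 1 / α < s) :
    ∫ x in Ioi (0 : ℝ), (1 + τ * x ^ α) ^ (-s) =
      τ ^ (-1 / α) / α * (Gamma (1 / α) * Gamma (s - 1 / α) / Gamma s) := by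
  have hc : 0 < 1 / α := by positivity
  have hsub : ∫ x in Ioi (0 : ℝ), (1 + τ * x ^ α) ^ (-s) =
      ∫ x in Ioi (0 : ℝ), 1 / α * τ ^ (1 - 1 / α) *
        ((τ * x) ^ (1 / α - 1) * (1 + τ * x) ^ (-s)) := by
    rw [← integral_comp_rpow_Ioi_of_pos hc]
    refine setIntegral_congr_fun measurableSet_Ioi fun x (hx : 0 < x) => ?_
    have hτ1 : τ ^ (1 - 1 / α) * τ ^ (1 / α - 1) = 1 := by rw [← rpow_add hτ]; simp
    have hxα : (x ^ (1 / α)) ^ α = x := by rw [one_div, rpow_inv_rpow hx.le hα.ne']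
    rw [smul_eq_mul, hxα, mul_rpow hτ.le hx.le]
    linear_combination (-(1 / α * x ^ (1 / α - 1) * (1 + τ * x) ^ (-s))) * hτ1
  rw [hsub, integral_const_mul,
    integral_comp_mul_left_Ioi (fun y => y ^ (1 / α - 1) * (1 + y) ^ (-s)) 0 hτ, mul_zero,
    integral_Ioi_rpow_mul_one_add_rpow_neg, integral_rpow_mul_one_sub_rpow hc (by linarith),
    add_sub_cancel, smul_eq_mul, ← mul_assoc, mul_assoc (1 / α), ← rpow_neg_one, ← rpow_add hτ]
  ring_nf

theorem integrableOn_Ioi_one_add_mul_rpow_rpow_neg {α τ s : ℝ} (hα : 0 < α) (hτ : 0 < τ)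
    (hs : 1 / α < s) :
    IntegrableOn (fun x : ℝ => (1 + τ * x ^ α) ^ (-s)) (Ioi 0) := by
  -- read off from the closed form: a non-integrable function has integral `0`
  refine Integrable.of_integral_ne_zero ?_
  rw [integral_Ioi_one_add_mul_rpow_rpow_neg hα hτ hs]
  have := Gamma_pos_of_pos (show 0 < 1 / α by positivity)
  have := Gamma_pos_of_pos (show 0 < s - 1 / α by linarith)
  have := Gamma_pos_of_pos (show 0 < s by linarith [show 0 < 1 / α by positivity])
  positivity

theorem integral_Ioi_one_add_mul_rpow_rpow_neg_two {α τ : ℝ} (hα : 1 < α) (hτ : 0 < τ) :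
    ∫ x in Ioi (0 : ℝ), (1 + τ * x ^ α) ^ (-2 : ℝ) =
      π * (α - 1) / (α ^ 2 * sin (π / α)) * τ ^ (-1 / α) := by
  have hα0 : 0 < α := by linarith
  have hc : 1 / α ≠ 1 := by rw [Ne, div_eq_one_iff_eq hα0.ne']; exact hα.ne
  rw [integral_Ioi_one_add_mul_rpow_rpow_neg hα0 hτ (by rw [div_lt_iff₀ hα0]; linarith),
    Gamma_two, div_one, Gamma_mul_Gamma_two_sub hc, mul_one_div]
  field_simp

theorem antitoneOn_one_add_mul_rpow_rpow_neg {α τ s : ℝ} (hα : 0 ≤ α) (hτ : 0 ≤ τ)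
    (hs : 0 ≤ s) : AntitoneOn (fun x : ℝ => (1 + τ * x ^ α) ^ (-s)) (Ici 0) :=
  fun x (hx : 0 ≤ x) _ _ hxy =>
    rpow_le_rpow_of_nonpos (by positivity) (by gcongr) (neg_nonpos.mpr hs)

theorem rpow_neg_div_rpow_neg_add {x : ℝ} (hx : 0 < x) (α τ : ℝ) :
    x ^ (-α) / (x ^ (-α) + τ) = (1 + τ * x ^ α)⁻¹ := by
  have := rpow_pos_of_pos hx α
  rw [rpow_neg hx.le]
  field_simp

section IntegralTest

variable {f : ℝ → ℝ}

theorem AntitoneOn.tsum_pnat_le_integral_Ioi (anti : AntitoneOn f (Ici 0))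
    (integrable : IntegrableOn f (Ioi 0)) (nonneg : ∀ t ∈ Ioi 0, 0 ≤ f t) :
    ∑' n : ℕ+, f n ≤ ∫ x in Ioi 0, f x := by
  simpa only [tsum_pnat_eq_tsum_succ (f := fun n : ℕ => f n)]
    using anti.tsum_add_one_le_integral integrable nonneg

theorem AntitoneOn.integral_Ioi_le_add_tsum_pnat (anti : AntitoneOn f (Ici 0))
    (integrable : IntegrableOn f (Ioi 0)) (nonneg : ∀ t ∈ Ioi 0, 0 ≤ f t) :
    ∫ x in Ioi 0, f x ≤ f 0 + ∑' n : ℕ+, f n := by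
  have summable := anti.summable_of_integrableOn_Ioi_zero integrable nonneg
  simpa only [← tsum_zero_pnat_eq_tsum_nat summable, Nat.cast_zero]
    using anti.integral_le_tsum summable nonneg

end IntegralTest

theorem covariance_statistic_power_law_bounds_general
    (α n τ Ω : ℝ) (hα : 1 < α) (hτ : 0 < τ)
    (hΩ : n * Ω = ∑' i : ℕ+, ((i : ℝ) ^ (-α) / ((i : ℝ) ^ (-α) + τ)) ^ 2) :
    Real.pi * (α - 1) / (α ^ 2 * Real.sin (Real.pi / α)) * τ ^ (-1 / α) - 1 ≤ n * Ω ∧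
      n * Ω ≤ Real.pi * (α - 1) / (α ^ 2 * Real.sin (Real.pi / α)) * τ ^ (-1 / α) := by
  have hα0 : 0 < α := by linarith
  set g : ℝ → ℝ := fun x => (1 + τ * x ^ α) ^ (-2 : ℝ)
  have hΩg : n * Ω = ∑' i : ℕ+, g i := by
    refine hΩ.trans (tsum_congr fun i => ?_)
    rw [rpow_neg_div_rpow_neg_add (by positivity), inv_pow, ← rpow_two,
      ← rpow_neg (by positivity)]
  have anti : AntitoneOn g (Ici 0) := antitoneOn_one_add_mul_rpow_rpow_neg hα0.le hτ.le two_pos.le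
  have integrable : IntegrableOn g (Ioi 0) :=
    integrableOn_Ioi_one_add_mul_rpow_rpow_neg hα0 hτ (by rw [div_lt_iff₀ hα0]; linarith)
  have nonneg : ∀ t ∈ Ioi (0 : ℝ), 0 ≤ g t := fun t (ht : 0 < t) => by positivity
  have hg0 : g 0 = 1 := by simp [g, zero_rpow hα0.ne']
  rw [hΩg, ← integral_Ioi_one_add_mul_rpow_rpow_neg_two hα hτ]
  constructor
  · linarith [anti.integral_Ioi_le_add_tsum_pnat integrable nonneg]
  · exact anti.tsum_pnat_le_integral_Ioi integrable nonneg

/-- If `τ > 0` solves `∑_{i=1}^∞ i^{-α}/(i^{-α} + τ) = n` with `α > 1` and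
`n ≥ 1`, and `Ω` is defined by `n Ω = ∑_{i=1}^∞ (i^{-α}/(i^{-α} + τ))²`, then
`π(α-1)/(α² sin(π/α)) τ^{-1/α} - 1 ≤ n Ω ≤ π(α-1)/(α² sin(π/α)) τ^{-1/α}`. -/
theorem covariance_statistic_power_law_bounds
    (α n τ Ω : ℝ) (hα : 1 < α) (hn : 1 ≤ n) (hτ : 0 < τ)
    (hsum : ∑' i : ℕ+, (i : ℝ) ^ (-α) / ((i : ℝ) ^ (-α) + τ) = n)
    (hΩ : n * Ω = ∑' i : ℕ+, ((i : ℝ) ^ (-α) / ((i : ℝ) ^ (-α) + τ)) ^ 2) :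
    Real.pi * (α - 1) / (α ^ 2 * Real.sin (Real.pi / α)) * τ ^ (-1 / α) - 1 ≤ n * Ω ∧
      n * Ω ≤ Real.pi * (α - 1) / (α ^ 2 * Real.sin (Real.pi / α)) * τ ^ (-1 / α) :=
  covariance_statistic_power_law_bounds_general α n τ Ω hα hτ hΩ
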